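/- Let α ∈ (1,2] and β > 0, and assume α/12 - β c₀^α ≤ 0 and -α/24 + β (α/(α+2)) c₀^α ≥ 0. Then the matrix -(α/24)D + βC (with D, C as in the ADI scheme, C strictly diagonally dominant with diagonal -c₀^α and off-diagonals -c_{i-j}^α ≥ 0) is negative diagonally dominant: each diagonal entry is ≤ 0 and each diagonal entry plus the sum of absolute values of off-diagonal entries in its row is ≤ 0. -/

import Mathlib

/-- The fractional difference coefficients `c_s^α`. -/
noncomputable def c (α : ℝ) (s : ℤ) : ℝ :=
  (-1 : ℝ) ^ s * Real.Gamma (α + 1) /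
    (Real.Gamma (α / 2 - s + 1) * Real.Gamma (α / 2 + s + 1))

/-- The `(M+1) × (M+1)` matrix `D` of the compact averaging operator:
`-2` on the diagonal, `1` on the sub/super-diagonal in the interior rows,
and the boundary rows (first and last) have only the diagonal entry `-2`. -/
def Dmat (M : ℕ) : Matrix (Fin (M + 1)) (Fin (M + 1)) ℝ := fun i j =>
  if i.val = 0 ∨ i.val = M then (if j = i then -2 else 0)
  else if j = i then -2
  else if |(i.val : ℤ) - (j.val : ℤ)| = 1 then 1 else 0

/-- The `(M+1) × (M+1)` Toeplitz-like matrix `C`: interior rows have entries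
`-c_{i-j}^α`, boundary rows have only the diagonal entry `-c₀^α`. -/
noncomputable def Cmat (α : ℝ) (M : ℕ) : Matrix (Fin (M + 1)) (Fin (M + 1)) ℝ :=
  fun i j =>
    if i.val = 0 ∨ i.val = M then (if j = i then -c α 0 else 0)
    else -c α ((i.val : ℤ) - (j.val : ℤ))

lemma c_symm (α : ℝ) (s : ℤ) : c α (-s) = c α s := by
  have h1 : ((-1 : ℝ) ^ (-s)) = (-1 : ℝ) ^ s := by
    rw [zpow_neg]
    refine inv_eq_of_mul_eq_one_right ?_
    rw [← zpow_add₀ (by norm_num : (-1:ℝ) ≠ 0), ← two_mul, zpow_mul]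
    norm_num
  unfold c
  rw [h1]
  push_cast
  ring_nf

lemma c_zero_pos (α : ℝ) (hα : α ∈ Set.Ioc (1 : ℝ) 2) : 0 < c α 0 := by
  unfold c
  simp only [zpow_zero, one_mul, Int.cast_zero, sub_zero, add_zero]
  have h1 : 0 < Real.Gamma (α + 1) := Real.Gamma_pos_of_pos (by linarith [hα.1])
  have h2 : 0 < Real.Gamma (α / 2 + 1) := Real.Gamma_pos_of_pos (by nlinarith [hα.1])
  positivity

lemma c_rec (α : ℝ) (hα : α ∈ Set.Ioc (1 : ℝ) 2) (s : ℕ) :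
    (2 * s + 2 + α) * c α ((s : ℤ) + 1) = (2 * s - α) * c α s := by
  obtain ⟨hα1, hα2⟩ := hα
  have hGpos : 0 < Real.Gamma (α / 2 + s + 1) :=
    Real.Gamma_pos_of_pos (by positivity)
  have harg1 : α / 2 - ((s : ℤ) + 1 : ℤ) + 1 = α / 2 - s := by push_cast; ring
  have harg2 : α / 2 + ((s : ℤ) + 1 : ℤ) + 1 = (α / 2 + s + 1) + 1 := by push_cast; ring
  have hpow : ((-1 : ℝ) ^ ((s : ℤ) + 1)) = -((-1 : ℝ) ^ (s : ℤ)) := by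
    rw [zpow_add_one₀ (by norm_num : (-1:ℝ) ≠ 0)]; ring
  have hG2 : Real.Gamma ((α / 2 + s + 1) + 1) = (α / 2 + s + 1) * Real.Gamma (α / 2 + s + 1) :=
    Real.Gamma_add_one (by positivity)
  unfold c
  rw [hpow]
  push_cast at *
  rw [harg1, harg2, hG2]
  by_cases h : α / 2 - s = 0
  · have hz : Real.Gamma (α / 2 - s) = 0 := by rw [h]; exact Real.Gamma_zero
    have hc : (2 : ℝ) * s - α = 0 := by linarith [h]
    rw [hz, hc]
    simp
  · have hG1 : Real.Gamma (α / 2 - (s:ℝ) + 1) = (α / 2 - s) * Real.Gamma (α / 2 - s) :=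
      Real.Gamma_add_one h
    rw [hG1]
    by_cases hg : Real.Gamma (α / 2 - (s:ℝ)) = 0
    · rw [hg]; simp
    · have hd1 : Real.Gamma (α / 2 - (s:ℝ)) * ((α / 2 + s + 1) * Real.Gamma (α / 2 + s + 1)) ≠ 0 := by
        have : (0:ℝ) < α / 2 + s + 1 := by positivity
        exact mul_ne_zero hg (by positivity)
      have hd2 : (α / 2 - (s:ℝ)) * Real.Gamma (α / 2 - s) * Real.Gamma (α / 2 + s + 1) ≠ 0 :=
        mul_ne_zero (mul_ne_zero h hg) (ne_of_gt hGpos)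
      rw [mul_div_assoc', mul_div_assoc', div_eq_div_iff hd1 hd2]
      ring

lemma c_one (α : ℝ) (hα : α ∈ Set.Ioc (1 : ℝ) 2) :
    c α 1 = -(α / (α + 2)) * c α 0 := by
  have h := c_rec α hα 0
  push_cast at h
  have h2 : (α + 2) ≠ 0 := by linarith [hα.1]
  have : (2 + α) * c α 1 = -α * c α 0 := by linarith [h]
  field_simp
  linarith [this]

lemma c_nat_nonpos (α : ℝ) (hα : α ∈ Set.Ioc (1 : ℝ) 2) (n : ℕ) :
    c α ((n : ℤ) + 1) ≤ 0 := by
  induction n with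
  | zero =>
    have h1 := c_one α hα
    have h0 := c_zero_pos α hα
    have hαp : 0 < α := by linarith [hα.1]
    have h2 : (0:ℝ) < α + 2 := by linarith
    have : 0 < α / (α + 2) := by positivity
    norm_num [h1]
    nlinarith
  | succ m ih =>
    have h := c_rec α hα (m + 1)
    push_cast at h ⊢
    have h1 : (0:ℝ) < 2 * ((m:ℝ) + 1) + 2 + α := by
      have := Nat.cast_nonneg (α := ℝ) m; linarith [hα.1]
    have h2 : (0:ℝ) ≤ 2 * ((m:ℝ) + 1) - α := by
      have := hα.2; have : α ≤ 2 := hα.2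
      nlinarith [Nat.cast_nonneg (α := ℝ) m]
    nlinarith [ih]

lemma c_nonpos (α : ℝ) (hα : α ∈ Set.Ioc (1 : ℝ) 2) (s : ℤ) (hs : s ≠ 0) :
    c α s ≤ 0 := by
  rcases lt_or_gt_of_ne hs with h | h
  · rw [← c_symm]
    obtain ⟨n, hn⟩ : ∃ n : ℕ, -s = (n : ℤ) + 1 := by
      refine ⟨(-s - 1).toNat, ?_⟩; omega
    rw [hn]; exact c_nat_nonpos α hα n
  · obtain ⟨n, hn⟩ : ∃ n : ℕ, s = (n : ℤ) + 1 := by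
      refine ⟨(s - 1).toNat, ?_⟩; omega
    rw [hn]; exact c_nat_nonpos α hα n

lemma c_partial_sum (α : ℝ) (hα : α ∈ Set.Ioc (1 : ℝ) 2) (n : ℕ) :
    α * (c α 0 + 2 * ∑ s ∈ Finset.range n, c α ((s : ℤ) + 1)) = (α - 2 * n) * c α n := by
  induction n with
  | zero => simp
  | succ m ih =>
    rw [Finset.sum_range_succ]
    have h := c_rec α hα m
    push_cast at h ⊢
    nlinarith [ih, h]

lemma half_sum (α : ℝ) (hα : α ∈ Set.Ioc (1 : ℝ) 2) (n : ℕ) :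
    ∑ s ∈ Finset.range n, (-c α ((s : ℤ) + 1)) ≤ c α 0 / 2 := by
  have hαp : 0 < α := by linarith [hα.1]
  have h0 := c_zero_pos α hα
  rw [Finset.sum_neg_distrib]
  cases n with
  | zero => simp; positivity
  | succ m =>
    have hps := c_partial_sum α hα (m + 1)
    have hcn : c α ((m : ℤ) + 1) ≤ 0 := c_nat_nonpos α hα m
    have hf : α - 2 * ((m:ℝ) + 1) ≤ 0 := by
      have := hα.2; nlinarith [Nat.cast_nonneg (α := ℝ) m]
    push_cast at hps
    nlinarith [mul_nonneg (neg_nonneg.mpr hf) (neg_nonneg.mpr hcn)]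

lemma row_sum_bound (α : ℝ) (hα : α ∈ Set.Ioc (1 : ℝ) 2) (M : ℕ) (i : Fin (M + 1)) :
    ∑ j ∈ Finset.univ.erase i, (-c α ((i.val : ℤ) - (j.val : ℤ))) ≤ c α 0 := by
  set n := i.val with hn
  set G : ℕ → ℝ := fun k => if k = n then 0 else -c α ((n : ℤ) - (k : ℤ)) with hG
  have hstep : ∑ j ∈ Finset.univ.erase i, (-c α ((i.val : ℤ) - (j.val : ℤ)))
      = ∑ k ∈ Finset.range (M + 1), G k := by
    rw [← Fin.sum_univ_eq_sum_range]
    rw [← Finset.add_sum_erase _ (fun j : Fin (M+1) => G j.val) (Finset.mem_univ i)]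
    have hGi : G i.val = 0 := by simp [hG, hn]
    rw [hGi, zero_add]
    refine Finset.sum_congr rfl (fun j hj => ?_)
    have hji : j ≠ i := Finset.ne_of_mem_erase hj
    have : j.val ≠ n := fun h => hji (Fin.ext h)
    simp [hG, this, hn]
    exact fun h => absurd (Fin.ext h) hji
  rw [hstep]
  have hnM : n ≤ M + 1 := le_of_lt i.isLt
  rw [Finset.range_eq_Ico, ← Finset.sum_Ico_consecutive _ (Nat.zero_le n) hnM]
  have hleft : ∑ k ∈ Finset.Ico 0 n, G k ≤ c α 0 / 2 := by
    rw [← Finset.range_eq_Ico]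
    have hrefl := Finset.sum_range_reflect (fun k => -c α ((k : ℤ) + 1)) n
    have heq : ∑ k ∈ Finset.range n, G k
        = ∑ k ∈ Finset.range n, -c α (((n - 1 - k : ℕ) : ℤ) + 1) := by
      refine Finset.sum_congr rfl (fun k hk => ?_)
      have hk' : k < n := Finset.mem_range.mp hk
      have h1 : k ≠ n := by omega
      have h2 : ((n - 1 - k : ℕ) : ℤ) + 1 = (n : ℤ) - k := by omega
      simp only [hG, if_neg h1, h2]
    rw [heq, hrefl]
    exact half_sum α hα n
  have hright : ∑ k ∈ Finset.Ico n (M + 1), G k ≤ c α 0 / 2 := by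
    rw [Finset.sum_Ico_eq_sum_range]
    have hM1 : M + 1 - n = (M - n) + 1 := by omega
    rw [hM1, Finset.sum_range_succ']
    have h0 : G (n + 0) = 0 := by simp [hG]
    rw [h0, add_zero]
    have heq : ∑ k ∈ Finset.range (M - n), G (n + (k + 1))
        = ∑ k ∈ Finset.range (M - n), (-c α ((k : ℤ) + 1)) := by
      refine Finset.sum_congr rfl (fun k hk => ?_)
      have h1 : n + (k + 1) ≠ n := by omega
      have h2 : (n : ℤ) - (n + (k + 1) : ℕ) = -((k : ℤ) + 1) := by push_cast; ring
      simp only [hG, if_neg h1, h2, c_symm]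
    rw [heq]
    exact half_sum α hα (M - n)
  linarith

theorem stmt_16 (α : ℝ) (hα : α ∈ Set.Ioc (1 : ℝ) 2) (β : ℝ) (hβ : 0 < β)
    (M : ℕ) (hM : 1 ≤ M)
    (hcond1 : α / 12 - β * c α 0 ≤ 0)
    (hcond2 : 0 ≤ -(α / 24) + β * (α / (α + 2)) * c α 0) :
    ∀ i, (-(α / 24) • Dmat M + β • Cmat α M) i i ≤ 0 ∧
      (-(α / 24) • Dmat M + β • Cmat α M) i i +
        ∑ j ∈ Finset.univ.erase i, |(-(α / 24) • Dmat M + β • Cmat α M) i j| ≤ 0 := by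
  intro i
  have hA : ∀ j k : Fin (M + 1), (-(α / 24) • Dmat M + β • Cmat α M) j k
      = -(α / 24) * Dmat M j k + β * Cmat α M j k := by
    intro j k
    simp [Matrix.add_apply, Matrix.smul_apply, smul_eq_mul]
  have hdiagD : Dmat M i i = -2 := by
    unfold Dmat; split <;> simp
  have hdiagC : Cmat α M i i = -c α 0 := by
    unfold Cmat; split
    · simp
    · simp
  have hii : (-(α / 24) • Dmat M + β • Cmat α M) i i = α / 12 - β * c α 0 := by
    rw [hA, hdiagD, hdiagC]; ring
  refine ⟨by rw [hii]; exact hcond1, ?_⟩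
  by_cases hbd : i.val = 0 ∨ i.val = M
  · -- boundary row: all off-diagonal entries vanish
    have hzero : ∀ j ∈ Finset.univ.erase i,
        |(-(α / 24) • Dmat M + β • Cmat α M) i j| = 0 := by
      intro j hj
      have hji : j ≠ i := Finset.ne_of_mem_erase hj
      rw [hA]
      unfold Dmat Cmat
      rw [if_pos hbd, if_pos hbd, if_neg hji, if_neg hji]
      simp
    rw [Finset.sum_congr rfl hzero, Finset.sum_const_zero, add_zero, hii]
    exact hcond1
  · -- interior row
    have hi0 : i.val ≠ 0 := fun h => hbd (Or.inl h)
    have hiM : i.val ≠ M := fun h => hbd (Or.inr h)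
    have hiLt : i.val < M + 1 := i.isLt
    have hCij : ∀ j : Fin (M + 1), Cmat α M i j = -c α ((i.val : ℤ) - (j.val : ℤ)) := by
      intro j; unfold Cmat; rw [if_neg hbd]
    have hDij : ∀ j : Fin (M + 1), j ≠ i →
        Dmat M i j = if |(i.val : ℤ) - (j.val : ℤ)| = 1 then 1 else 0 := by
      intro j hji; unfold Dmat; rw [if_neg hbd, if_neg hji]
    -- each off-diagonal entry is nonnegative
    have hnn : ∀ j ∈ Finset.univ.erase i,
        0 ≤ (-(α / 24) • Dmat M + β • Cmat α M) i j := by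
      intro j hj
      have hji : j ≠ i := Finset.ne_of_mem_erase hj
      have hvne : (i.val : ℤ) - (j.val : ℤ) ≠ 0 := by
        intro h
        exact hji (Fin.ext (by omega))
      rw [hA, hCij, hDij j hji]
      by_cases h1 : |(i.val : ℤ) - (j.val : ℤ)| = 1
      · rw [if_pos h1]
        have hc1 : c α ((i.val : ℤ) - (j.val : ℤ)) = c α 1 := by
          rcases abs_eq (by norm_num : (0:ℤ) ≤ 1) |>.mp h1 with h | h
          · rw [h]
          · rw [h, ← c_symm]; norm_num
        rw [hc1, c_one α hα]
        have : β * (α / (α + 2)) * c α 0 = β * -(-(α / (α + 2)) * c α 0) := by ring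
        nlinarith [hcond2]
      · rw [if_neg h1]
        have := c_nonpos α hα _ hvne
        nlinarith
    -- replace |·| by the entry itself
    have habs : ∑ j ∈ Finset.univ.erase i, |(-(α / 24) • Dmat M + β • Cmat α M) i j|
        = ∑ j ∈ Finset.univ.erase i, (-(α / 24) • Dmat M + β • Cmat α M) i j :=
      Finset.sum_congr rfl (fun j hj => abs_of_nonneg (hnn j hj))
    rw [habs]
    have hsplit : ∑ j ∈ Finset.univ.erase i, (-(α / 24) • Dmat M + β • Cmat α M) i j
        = -(α / 24) * (∑ j ∈ Finset.univ.erase i, Dmat M i j)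
          + β * (∑ j ∈ Finset.univ.erase i, (-c α ((i.val : ℤ) - (j.val : ℤ)))) := by
      rw [Finset.mul_sum, Finset.mul_sum, ← Finset.sum_add_distrib]
      refine Finset.sum_congr rfl (fun j hj => ?_)
      rw [hA, hCij]
    -- the D-row sums to 2
    set j1 : Fin (M + 1) := ⟨i.val - 1, by omega⟩ with hj1def
    set j2 : Fin (M + 1) := ⟨i.val + 1, by omega⟩ with hj2def
    have e1 : j1.val = i.val - 1 := rfl
    have e2 : j2.val = i.val + 1 := rfl
    have hj1i : j1 ≠ i := by
      intro h; have := congrArg Fin.val h; rw [e1] at this; omega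
    have hj2i : j2 ≠ i := by
      intro h; have := congrArg Fin.val h; rw [e2] at this; omega
    have hj12 : j2 ≠ j1 := by
      intro h; have := congrArg Fin.val h; rw [e1, e2] at this; omega
    have hj1mem : j1 ∈ Finset.univ.erase i := Finset.mem_erase.mpr ⟨hj1i, Finset.mem_univ _⟩
    have hj2mem : j2 ∈ (Finset.univ.erase i).erase j1 :=
      Finset.mem_erase.mpr ⟨hj12, Finset.mem_erase.mpr ⟨hj2i, Finset.mem_univ _⟩⟩
    have hsumD : ∑ j ∈ Finset.univ.erase i, Dmat M i j = 2 := by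
      rw [← Finset.add_sum_erase _ _ hj1mem, ← Finset.add_sum_erase _ _ hj2mem]
      have hv1 : ((j1.val : ℤ)) = (i.val : ℤ) - 1 := by rw [e1]; omega
      have hv2 : ((j2.val : ℤ)) = (i.val : ℤ) + 1 := by rw [e2]; omega
      have hD1 : Dmat M i j1 = 1 := by
        rw [hDij j1 hj1i, if_pos (by rw [hv1]; norm_num)]
      have hD2 : Dmat M i j2 = 1 := by
        rw [hDij j2 hj2i, if_pos (by rw [hv2]; norm_num)]
      have hrest : ∑ j ∈ ((Finset.univ.erase i).erase j1).erase j2, Dmat M i j = 0 := by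
        refine Finset.sum_eq_zero (fun j hj => ?_)
        have h2 : j ≠ j2 := Finset.ne_of_mem_erase hj
        have h1 : j ≠ j1 := Finset.ne_of_mem_erase (Finset.mem_of_mem_erase hj)
        have hi' : j ≠ i := Finset.ne_of_mem_erase
          (Finset.mem_of_mem_erase (Finset.mem_of_mem_erase hj))
        have hw1 : j.val ≠ j1.val := fun h => h1 (Fin.ext h)
        have hw2 : j.val ≠ j2.val := fun h => h2 (Fin.ext h)
        have hwi : j.val ≠ i.val := fun h => hi' (Fin.ext h)
        rw [e1] at hw1; rw [e2] at hw2
        rw [hDij j hi', if_neg ?_]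
        intro hab
        rcases (abs_eq (by norm_num : (0:ℤ) ≤ 1)).mp hab with h | h <;> omega
      rw [hD1, hD2, hrest]; norm_num
    have hsumC : β * (∑ j ∈ Finset.univ.erase i, (-c α ((i.val : ℤ) - (j.val : ℤ))))
        ≤ β * c α 0 :=
      mul_le_mul_of_nonneg_left (row_sum_bound α hα M i) (le_of_lt hβ)
    rw [hii, hsplit, hsumD]
    linarith
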